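/- If β is the real root of X^3 - X^2 - X - 1 and α is a complex root of the same polynomial with α ≠ β, then |α| < 1. -/

import Mathlib

/-!
Dividing the cubic by `X - β` shows that every other root `α` satisfies the real quadratic
`α ^ 2 + (β - 1) α + (β ^ 2 - β - 1) = 0`, whose discriminant `-(3β - 5)(β + 1)` is negative
because `β > 5/3`. So `α` is not real, `α` and `conj α` are the two roots, and `|α| ^ 2 = β ^ 2 - β - 1 = 1 / β < 1`.
-/

theorem Complex.normSq_eq_of_sq_add_mul_add_eq_zero {b c : ℝ} (hdisc : discrim 1 b c < 0)
    {z : ℂ} (hz : z ^ 2 + b * z + c = 0) : Complex.normSq z = c := by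
  have hre : z.re ^ 2 - z.im ^ 2 + b * z.re + c = 0 := by
    simpa [sq] using congrArg Complex.re hz
  have him : z.im * (2 * z.re + b) = 0 := by
    have h := congrArg Complex.im hz
    simp only [sq, Complex.add_im, Complex.mul_im, Complex.ofReal_re, Complex.ofReal_im,
      Complex.zero_im] at h
    linear_combination h
  have him_ne : z.im ≠ 0 := by
    intro h
    rw [discrim] at hdisc
    nlinarith [sq_nonneg (2 * z.re + b)]
  have hsum : 2 * z.re + b = 0 := (mul_eq_zero.1 him).resolve_left him_ne
  rw [Complex.normSq_apply]
  linear_combination -hre + z.re * hsum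

theorem sq_add_mul_add_eq_zero_of_tribonacci_roots {R : Type*} [CommRing R] [IsDomain R]
    {x y : R} (hx : x ^ 3 - x ^ 2 - x - 1 = 0) (hy : y ^ 3 - y ^ 2 - y - 1 = 0) (hne : x ≠ y) :
    x ^ 2 + (y - 1) * x + (y ^ 2 - y - 1) = 0 := by
  have h : (x - y) * (x ^ 2 + (y - 1) * x + (y ^ 2 - y - 1)) = 0 := by
    linear_combination hx - hy
  exact (mul_eq_zero.1 h).resolve_left (sub_ne_zero.2 hne)

theorem five_lt_three_mul_of_tribonacci_root {β : ℝ} (hβ : β ^ 3 - β ^ 2 - β - 1 = 0) :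
    5 < 3 * β := by
  nlinarith [sq_nonneg (β + 1), sq_nonneg (β - 1), sq_nonneg β, sq_nonneg (3 * β - 5)]

theorem tribonacci_pisot (β : ℝ) (hβ : β ^ 3 - β ^ 2 - β - 1 = 0)
    (α : ℂ) (hα : α ^ 3 - α ^ 2 - α - 1 = 0) (hne : α ≠ (β : ℂ)) :
    ‖α‖ < 1 := by
  have hβ_gt := five_lt_three_mul_of_tribonacci_root hβ
  have hq : α ^ 2 + ((β - 1 : ℝ) : ℂ) * α + ((β ^ 2 - β - 1 : ℝ) : ℂ) = 0 := by
    push_cast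
    exact sq_add_mul_add_eq_zero_of_tribonacci_roots hα (by exact_mod_cast congrArg Complex.ofReal hβ) hne
  have hdisc : discrim 1 (β - 1) (β ^ 2 - β - 1) < 0 := by
    rw [discrim]
    nlinarith
  have hnorm : ‖α‖ ^ 2 = β ^ 2 - β - 1 := by
    rw [Complex.sq_norm, Complex.normSq_eq_of_sq_add_mul_add_eq_zero hdisc hq]
  have hnorm_lt : β ^ 2 - β - 1 < 1 := by nlinarith
  exact (sq_lt_one_iff₀ (norm_nonneg α)).1 (hnorm ▸ hnorm_lt)
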